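/- Let I ⊆ ℝ be an open interval and f, g : I → ℝ smooth with f > 0 and g' ≠ 0 on I, and suppose f, g satisfy Eq. (I) on I. Define H₁₁ = 6(f')²/f − 6g(f')³/(f²g') − 8f'' + 10g·f'·f''/(f·g') − 6g(f')²g''/(f·(g')²) + 8g·f''·g''/(g')² + 30f(g'')²/(g')² − 60f·g·(g'')³/(g')⁴ − 4g·f'''/g' − 20f·g'''/g' + 60f·g·g''·g'''/(g')³ − 10f·g·g''''/(g')², and H₁₂ = −6(f')³/(f²g') + 10f'·f''/(f·g') − 6(f')²g''/(f·(g')²) + 8f''·g''/(g')² − 60f(g'')³/(g')⁴ − 4f'''/g' + 60f·g''·g'''/(g')³ − 10f·g''''/(g')². Then H₁₁ = 0 and H₁₂ = 0 identically on I. (That is, the first two determining equations of the A₃,₃⊕A₁ symmetry case are consequences of Eq. (I).) -/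

import Mathlib

/-- Eq. (I): `g''' = (3/10)·g'·(f')²/f² − (2/5)·g'·f''/f + (3/2)·(g'')²/g'`. -/
def SatEqI (f g : ℝ → ℝ) (x : ℝ) : Prop :=
  (deriv^[3] g x) =
    (3/10) * deriv g x * (deriv f x)^2 / (f x)^2
      - (2/5) * deriv g x * (deriv^[2] f x) / f x
      + (3/2) * (deriv^[2] g x)^2 / deriv g x

/-- The differential function `H₁₁`. -/
noncomputable def H11 (f g : ℝ → ℝ) (x : ℝ) : ℝ :=
  6 * (deriv f x)^2 / f x
    - 6 * g x * (deriv f x)^3 / ((f x)^2 * deriv g x)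
    - 8 * (deriv^[2] f x)
    + 10 * g x * deriv f x * (deriv^[2] f x) / (f x * deriv g x)
    - 6 * g x * (deriv f x)^2 * (deriv^[2] g x) / (f x * (deriv g x)^2)
    + 8 * g x * (deriv^[2] f x) * (deriv^[2] g x) / (deriv g x)^2
    + 30 * f x * (deriv^[2] g x)^2 / (deriv g x)^2
    - 60 * f x * g x * (deriv^[2] g x)^3 / (deriv g x)^4
    - 4 * g x * (deriv^[3] f x) / deriv g x
    - 20 * f x * (deriv^[3] g x) / deriv g x
    + 60 * f x * g x * (deriv^[2] g x) * (deriv^[3] g x) / (deriv g x)^3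
    - 10 * f x * g x * (deriv^[4] g x) / (deriv g x)^2

/-- The differential function `H₁₂`. -/
noncomputable def H12 (f g : ℝ → ℝ) (x : ℝ) : ℝ :=
  -6 * (deriv f x)^3 / ((f x)^2 * deriv g x)
    + 10 * deriv f x * (deriv^[2] f x) / (f x * deriv g x)
    - 6 * (deriv f x)^2 * (deriv^[2] g x) / (f x * (deriv g x)^2)
    + 8 * (deriv^[2] f x) * (deriv^[2] g x) / (deriv g x)^2
    - 60 * f x * (deriv^[2] g x)^3 / (deriv g x)^4
    - 4 * (deriv^[3] f x) / deriv g x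
    + 60 * f x * (deriv^[2] g x) * (deriv^[3] g x) / (deriv g x)^3
    - 10 * f x * (deriv^[4] g x) / (deriv g x)^2

/-!
Clearing denominators, Eq. (I) says that `P := 10 f² g' g''' − 3 g'² f'² + 4 f g'² f'' − 15 f² g''²`
vanishes on `I`; since `I` is open, so does its derivative `P'`. Both determining functions are
combinations of `P` and `P'`:
`H₁₂ = (−f g' P' + (4 f g'' + 2 f' g') P) / (f² g'⁴)` and `H₁₁ = g H₁₂ − 2 P / (f g'²)`.
-/

open Filter Topology

section IterateDeriv

variable {𝕜 F : Type*} [NontriviallyNormedField 𝕜] [NormedAddCommGroup F] [NormedSpace 𝕜 F]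
  {f : 𝕜 → F} {s : Set 𝕜}

theorem ContDiffOn.iterate_deriv_of_isOpen (hf : ContDiffOn 𝕜 (⊤ : ℕ∞) f s) (hs : IsOpen s)
    (n : ℕ) : ContDiffOn 𝕜 (⊤ : ℕ∞) (deriv^[n] f) s := by
  induction n with
  | zero => exact hf
  | succ k ih =>
    rw [Function.iterate_succ_apply']
    exact ih.deriv_of_isOpen hs (by simp)

theorem ContDiffOn.hasDerivAt_iterate_deriv (hf : ContDiffOn 𝕜 (⊤ : ℕ∞) f s) (hs : IsOpen s)
    {x : 𝕜} (hx : x ∈ s) (n : ℕ) : HasDerivAt (deriv^[n] f) (deriv^[n + 1] f x) x := by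
  rw [Function.iterate_succ_apply']
  exact (((hf.iterate_deriv_of_isOpen hs n).differentiableOn (by simp)).differentiableAt
    (hs.mem_nhds hx)).hasDerivAt

end IterateDeriv

noncomputable def eqIPoly (f g : ℝ → ℝ) (x : ℝ) : ℝ :=
  10 * f x ^ 2 * deriv g x * deriv^[3] g x - 3 * deriv g x ^ 2 * deriv f x ^ 2
    + 4 * f x * deriv g x ^ 2 * deriv^[2] f x - 15 * f x ^ 2 * deriv^[2] g x ^ 2

noncomputable def eqIPolyDeriv (f g : ℝ → ℝ) (x : ℝ) : ℝ :=
  10 * f x ^ 2 * deriv g x * deriv^[4] g x + 20 * f x * deriv f x * deriv g x * deriv^[3] g x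
    - 20 * f x ^ 2 * deriv^[2] g x * deriv^[3] g x
    - 6 * deriv f x ^ 2 * deriv g x * deriv^[2] g x
    - 2 * deriv f x * deriv^[2] f x * deriv g x ^ 2
    + 8 * f x * deriv^[2] f x * deriv g x * deriv^[2] g x
    + 4 * f x * deriv^[3] f x * deriv g x ^ 2
    - 30 * f x * deriv f x * deriv^[2] g x ^ 2

section Algebra

variable {f g : ℝ → ℝ} {x : ℝ}

theorem SatEqI.eqIPoly_eq_zero (h : SatEqI f g x) (hf : f x ≠ 0) (hg : deriv g x ≠ 0) :
    eqIPoly f g x = 0 := by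
  rw [SatEqI] at h
  rw [eqIPoly, h]
  field_simp
  ring

theorem H12_eq (hf : f x ≠ 0) (hg : deriv g x ≠ 0) :
    H12 f g x = (-f x * deriv g x * eqIPolyDeriv f g x
      + (4 * f x * deriv^[2] g x + 2 * deriv f x * deriv g x) * eqIPoly f g x)
        / (f x ^ 2 * deriv g x ^ 4) := by
  rw [H12, eqIPoly, eqIPolyDeriv]
  field_simp
  ring

theorem H11_eq (hf : f x ≠ 0) (hg : deriv g x ≠ 0) :
    H11 f g x = g x * H12 f g x - 2 * eqIPoly f g x / (f x * deriv g x ^ 2) := by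
  rw [H11, H12, eqIPoly]
  field_simp
  ring

end Algebra

theorem hasDerivAt_eqIPoly {f g : ℝ → ℝ} {x : ℝ}
    (hf : ∀ n, HasDerivAt (deriv^[n] f) (deriv^[n + 1] f x) x)
    (hg : ∀ n, HasDerivAt (deriv^[n] g) (deriv^[n + 1] g x) x) :
    HasDerivAt (eqIPoly f g) (eqIPolyDeriv f g x) x := by
  have hf0 : HasDerivAt f (deriv f x) x := hf 0
  have hf1 : HasDerivAt (deriv f) (deriv^[2] f x) x := hf 1
  have hg1 : HasDerivAt (deriv g) (deriv^[2] g x) x := hg 1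
  have h := ((((hf0.pow 2).const_mul 10).mul hg1).mul (hg 3)).sub
      (((hg1.pow 2).const_mul 3).mul (hf1.pow 2)) |>.add
      (((hf0.const_mul 4).mul (hg1.pow 2)).mul (hf 2)) |>.sub
      ((hf0.pow 2).const_mul 15 |>.mul ((hg 2).pow 2))
  refine h.congr_deriv ?_
  simp only [eqIPolyDeriv, Pi.mul_apply, Pi.pow_apply, Nat.reduceAdd]
  ring

theorem statement19_general
    (I : Set ℝ) (hIopen : IsOpen I)
    (f g : ℝ → ℝ)
    (hf : ContDiffOn ℝ (⊤ : ℕ∞) f I) (hg : ContDiffOn ℝ (⊤ : ℕ∞) g I)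
    (hfpos : ∀ x ∈ I, 0 < f x) (hg' : ∀ x ∈ I, deriv g x ≠ 0)
    (hEqI : ∀ x ∈ I, SatEqI f g x) :
    ∀ x ∈ I, H11 f g x = 0 ∧ H12 f g x = 0 := by
  intro x hx
  have hfx : f x ≠ 0 := (hfpos x hx).ne'
  have hP : eqIPoly f g =ᶠ[𝓝 x] 0 := eventually_of_mem (hIopen.mem_nhds hx) fun y hy =>
    (hEqI y hy).eqIPoly_eq_zero (hfpos y hy).ne' (hg' y hy)
  have hP' : eqIPolyDeriv f g x = 0 := by
    rw [← (hasDerivAt_eqIPoly (hf.hasDerivAt_iterate_deriv hIopen hx)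
      (hg.hasDerivAt_iterate_deriv hIopen hx)).deriv, hP.deriv_eq]
    simp
  have h12 : H12 f g x = 0 := by
    rw [H12_eq hfx (hg' x hx), hP', hP.eq_of_nhds]
    simp
  refine ⟨?_, h12⟩
  rw [H11_eq hfx (hg' x hx), h12, hP.eq_of_nhds]
  simp

/-- if `f, g` satisfy Eq. (I) on `I`, then the determining functions
`H₁₁` and `H₁₂` of the `A₃,₃⊕A₁` symmetry case vanish identically on `I`. -/
theorem statement19
    (I : Set ℝ) (hIopen : IsOpen I) (hIinterval : I.OrdConnected)
    (f g : ℝ → ℝ)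
    (hf : ContDiffOn ℝ (⊤ : ℕ∞) f I) (hg : ContDiffOn ℝ (⊤ : ℕ∞) g I)
    (hfpos : ∀ x ∈ I, 0 < f x) (hg' : ∀ x ∈ I, deriv g x ≠ 0)
    (hEqI : ∀ x ∈ I, SatEqI f g x) :
    ∀ x ∈ I, H11 f g x = 0 ∧ H12 f g x = 0 :=
  statement19_general I hIopen f g hf hg hfpos hg' hEqI
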